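/- arXiv:1812.08268 — 6 statements merged into one kernel-verified Lean document; each statement's English description precedes it below -/
import Mathlib

section
/- For constants a, b ≥ 0, define h_{a,b} : [0,∞) → [0,∞) by h_{a,b}(u) = b·u^{3/2} for u ≤ a²/b² and h_{a,b}(u) = (3/2)·a·u − a³/(2b²) for u ≥ a²/b². Then h_{a,b} is convex, and min{a·u, b·u^{3/2}} ≤ h_{a,b}(u) ≤ min{(3/2)·a·u, b·u^{3/2}} for all u ≥ 0. -/
/-!
For `b > 0` the function `h_{a,b}` is the upper envelope of the tangent lines
`u ↦ (3/2)·b·s·u − (1/2)·b·s³` of `u ↦ b·u^{3/2}` at the points `u = s²` with `0 ≤ s ≤ a/b`: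
below `a²/b²` the tangent at `u` itself is the highest, beyond it the one at `a²/b²`.
Being a pointwise maximum of affine functions, `h_{a,b}` is convex; since it is attained by a
tangent line of the convex function `b·u^{3/2}`, whose slope `(3/2)·b·s` is at most `(3/2)·a`,
it lies below `min{(3/2)·a·u, b·u^{3/2}}`.
-/

open Real Set

theorem convexOn_of_isGreatest_range {ι 𝕜 E β : Type*} [Semiring 𝕜] [PartialOrder 𝕜]
    [AddCommMonoid E] [SMul 𝕜 E] [AddCommMonoid β] [PartialOrder β] [IsOrderedAddMonoid β]
    [Module 𝕜 β] [PosSMulMono 𝕜 β] {s : Set E} (hs : Convex 𝕜 s) {f : ι → E → β} {g : E → β}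
    (hf : ∀ i, ConvexOn 𝕜 s (f i)) (hg : ∀ x ∈ s, IsGreatest (range fun i ↦ f i x) (g x)) :
    ConvexOn 𝕜 s g := by
  refine ⟨hs, fun x hx y hy a b ha hb hab ↦ ?_⟩
  obtain ⟨⟨i, hi⟩, -⟩ := hg _ (hs hx hy ha hb hab)
  calc g (a • x + b • y) = f i (a • x + b • y) := hi.symm
    _ ≤ a • f i x + b • f i y := (hf i).2 hx hy ha hb hab
    _ ≤ a • g x + b • g y := by
      gcongr
      · exact (hg x hx).2 ⟨i, rfl⟩
      · exact (hg y hy).2 ⟨i, rfl⟩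

theorem rpow_three_halves {u : ℝ} (hu : 0 ≤ u) : u ^ ((3 : ℝ) / 2) = √u ^ 3 := by
  rw [rpow_div_two_eq_sqrt _ hu]
  exact_mod_cast rpow_natCast √u 3

/-- The tangent line of `u ↦ b * u ^ (3/2)` at `u = s ^ 2`. -/
noncomputable def threeHalvesTangent (b s u : ℝ) : ℝ := 3 / 2 * b * s * u - 1 / 2 * b * s ^ 3

section threeHalvesTangent

variable {b s t u : ℝ}

theorem convexOn_threeHalvesTangent {D : Set ℝ} (hD : Convex ℝ D) :
    ConvexOn ℝ D (threeHalvesTangent b s) :=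
  ⟨hD, fun x _ y _ p q _ _ hpq ↦ le_of_eq <| by
    simp only [threeHalvesTangent, smul_eq_mul]
    linear_combination (1 / 2 * b * s ^ 3) * hpq⟩

theorem threeHalvesTangent_sqrt (hu : 0 ≤ u) :
    threeHalvesTangent b √u u = b * u ^ ((3 : ℝ) / 2) := by
  rw [threeHalvesTangent, rpow_three_halves hu]
  linear_combination (3 / 2 * b * √u) * (sq_sqrt hu).symm

theorem threeHalvesTangent_le (hb : 0 ≤ b) (hs : 0 ≤ s) (hu : 0 ≤ u) :
    threeHalvesTangent b s u ≤ b * u ^ ((3 : ℝ) / 2) := by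
  obtain ⟨r, hr, rfl⟩ : ∃ r, 0 ≤ r ∧ u = r ^ 2 := ⟨√u, sqrt_nonneg u, (sq_sqrt hu).symm⟩
  rw [threeHalvesTangent, rpow_three_halves hu, sqrt_sq hr]
  -- `2 r³ + s³ - 3 s r² = (s - r)² (s + 2 r)`
  nlinarith [mul_nonneg hb (mul_nonneg (sq_nonneg (s - r)) (by positivity : 0 ≤ s + 2 * r))]

theorem threeHalvesTangent_le_of_le (hb : 0 ≤ b) (hs : 0 ≤ s) (hst : s ≤ t) (ht : t ^ 2 ≤ u) :
    threeHalvesTangent b s u ≤ threeHalvesTangent b t u := by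
  unfold threeHalvesTangent
  -- the difference is `b (t - s) (3 u - s² - s t - t²) / 2` and `s² + s t + t² ≤ 3 t² ≤ 3 u`
  have hquad : s ^ 2 + s * t + t ^ 2 ≤ 3 * u := by nlinarith
  nlinarith [mul_nonneg (mul_nonneg hb (sub_nonneg.2 hst)) (sub_nonneg.2 hquad)]

end threeHalvesTangent

noncomputable def cappedThreeHalves (a b u : ℝ) : ℝ :=
  if u ≤ a ^ 2 / b ^ 2 then b * u ^ ((3 : ℝ) / 2) else (3 / 2) * a * u - a ^ 3 / (2 * b ^ 2)

section cappedThreeHalves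

variable {a b u : ℝ}

theorem cappedThreeHalves_eq_threeHalvesTangent (ha : 0 ≤ a) (hb : 0 < b) (hu : 0 ≤ u) :
    cappedThreeHalves a b u = threeHalvesTangent b (min √u (a / b)) u := by
  have hab : 0 ≤ a / b := div_nonneg ha hb.le
  simp only [cappedThreeHalves, ← div_pow, ← sqrt_le_left hab]
  split_ifs with hu'
  · rw [min_eq_left hu', threeHalvesTangent_sqrt hu]
  · rw [min_eq_right (le_of_not_ge hu'), threeHalvesTangent]
    field_simp

theorem isGreatest_cappedThreeHalves (ha : 0 ≤ a) (hb : 0 < b) (hu : 0 ≤ u) :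
    IsGreatest (range fun s : Icc 0 (a / b) ↦ threeHalvesTangent b s u) (cappedThreeHalves a b u) := by
  have hab : 0 ≤ a / b := div_nonneg ha hb.le
  refine ⟨⟨⟨min √u (a / b), le_min (sqrt_nonneg u) hab, min_le_right _ _⟩,
    (cappedThreeHalves_eq_threeHalvesTangent ha hb hu).symm⟩, ?_⟩
  rintro _ ⟨⟨s, hs0, hsab⟩, rfl⟩
  rw [cappedThreeHalves_eq_threeHalvesTangent ha hb hu]
  rcases le_total √u (a / b) with hu' | hu'
  · rw [min_eq_left hu', threeHalvesTangent_sqrt hu]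
    exact threeHalvesTangent_le hb.le hs0 hu
  · rw [min_eq_right hu']
    exact threeHalvesTangent_le_of_le hb.le hs0 hsab ((le_sqrt hab hu).1 hu')

theorem convexOn_cappedThreeHalves (ha : 0 ≤ a) (hb : 0 < b) : ConvexOn ℝ (Ici 0) (cappedThreeHalves a b) :=
  convexOn_of_isGreatest_range (convex_Ici 0) (fun _ ↦ convexOn_threeHalvesTangent (convex_Ici 0))
    fun _ hu ↦ isGreatest_cappedThreeHalves ha hb hu

theorem min_le_cappedThreeHalves (ha : 0 ≤ a) :
    min (a * u) (b * u ^ ((3 : ℝ) / 2)) ≤ cappedThreeHalves a b u := by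
  rw [cappedThreeHalves]
  split_ifs with hu'
  · exact min_le_right _ _
  · have : a * (a ^ 2 / b ^ 2) ≤ a * u := mul_le_mul_of_nonneg_left (le_of_not_ge hu') ha
    have hcube : a ^ 3 / (2 * b ^ 2) = a * (a ^ 2 / b ^ 2) / 2 := by ring
    linarith [min_le_left (a * u) (b * u ^ ((3 : ℝ) / 2))]

theorem cappedThreeHalves_le_min (ha : 0 ≤ a) (hb : 0 < b) (hu : 0 ≤ u) :
    cappedThreeHalves a b u ≤ min ((3 / 2) * a * u) (b * u ^ ((3 : ℝ) / 2)) := by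
  set m := min √u (a / b)
  have hm : 0 ≤ m := le_min (sqrt_nonneg u) (div_nonneg ha hb.le)
  have hbm : b * m ≤ a := by
    calc b * m ≤ b * (a / b) := mul_le_mul_of_nonneg_left (min_le_right _ _) hb.le
      _ = a := mul_div_cancel₀ a hb.ne'
  rw [cappedThreeHalves_eq_threeHalvesTangent ha hb hu]
  refine le_min ?_ (threeHalvesTangent_le hb.le hm hu)
  rw [threeHalvesTangent]
  nlinarith [mul_le_mul_of_nonneg_right hbm hu, mul_nonneg hb.le (pow_nonneg hm 3)]

end cappedThreeHalves

/-- For `a, b ≥ 0`, the function `h_{a,b}` defined by `h_{a,b}(u) = b·u^{3/2}` for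
`u ≤ a²/b²` and `h_{a,b}(u) = (3/2)·a·u − a³/(2b²)` for `u ≥ a²/b²` (with
`h_{a,0} ≡ 0`) is convex on `[0,∞)` and satisfies
`min{a·u, b·u^{3/2}} ≤ h_{a,b}(u) ≤ min{(3/2)·a·u, b·u^{3/2}}` for all `u ≥ 0`. -/
theorem stmt0 (a b : ℝ) (ha : 0 ≤ a) (hb : 0 ≤ b)
    (h : ℝ → ℝ)
    (hdef : ∀ u : ℝ, h u =
      if b = 0 then 0
      else if u ≤ a ^ 2 / b ^ 2 then b * u ^ ((3 : ℝ) / 2)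
      else (3 / 2) * a * u - a ^ 3 / (2 * b ^ 2)) :
    ConvexOn ℝ (Set.Ici (0 : ℝ)) h ∧
      (∀ u : ℝ, 0 ≤ u →
        min (a * u) (b * u ^ ((3 : ℝ) / 2)) ≤ h u ∧
          h u ≤ min ((3 / 2) * a * u) (b * u ^ ((3 : ℝ) / 2))) := by
  rcases hb.eq_or_lt with rfl | hb
  · obtain rfl : h = fun _ ↦ 0 := funext fun u ↦ by rw [hdef, if_pos rfl]
    exact ⟨convexOn_const 0 (convex_Ici 0), fun u hu ↦ ⟨by simp, by simp; positivity⟩⟩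
  · obtain rfl : h = cappedThreeHalves a b :=
      funext fun u ↦ by rw [hdef, if_neg hb.ne', cappedThreeHalves]
    exact ⟨convexOn_cappedThreeHalves ha hb, fun u hu ↦
      ⟨min_le_cappedThreeHalves ha, cappedThreeHalves_le_min ha hb hu⟩⟩
end

section
/- Let X be a nonnegative random variable and a, b ≥ 0. Then min{a·E[X²], b·(E[X²])^{3/2}} ≤ E[min{(3/2)·a·X², b·X³}]. -/
open MeasureTheory Real

/-!
With `u = x²`, the map `u ↦ min (a u) (b u^{3/2})` lies below the convex function `h` that follows
`b u^{3/2}` up to `u = (a/b)²` and its tangent line afterwards, and `h ≤ min ((3/2) a u) (b u^{3/2})`.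
Jensen for `h` at `u = E[X²]` amounts to integrating a supporting line of `h`: the tangent of
`b u^{3/2}` at `u = t²`, for `t = √(E[X²])` or `t = a/b`, whichever is smaller.
-/

lemma tangent_le_cube {b t x : ℝ} (hb : 0 ≤ b) (ht : 0 ≤ t) (hx : 0 ≤ x) :
    3 / 2 * b * t * x ^ 2 - 1 / 2 * b * t ^ 3 ≤ b * x ^ 3 := by
  -- the gap is `b (x - t)² (2x + t) / 2`
  nlinarith [mul_nonneg hb (mul_nonneg (sq_nonneg (x - t)) (by linarith : (0 : ℝ) ≤ 2 * x + t))]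

lemma tangent_le_min {a b t x : ℝ} (hb : 0 ≤ b) (ht : 0 ≤ t) (hbt : b * t ≤ a) (hx : 0 ≤ x) :
    3 / 2 * b * t * x ^ 2 - 1 / 2 * b * t ^ 3 ≤ min (3 / 2 * a * x ^ 2) (b * x ^ 3) := by
  refine le_min ?_ (tangent_le_cube hb ht hx)
  have : 0 ≤ b * t ^ 3 := by positivity
  nlinarith [mul_le_mul_of_nonneg_right hbt (sq_nonneg x)]

lemma exists_tangent_ge_min {a b r : ℝ} (ha : 0 ≤ a) (hb : 0 ≤ b) (hr : 0 ≤ r) :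
    ∃ t, 0 ≤ t ∧ b * t ≤ a ∧
      min (a * r ^ 2) (b * r ^ 3) ≤ 3 / 2 * b * t * r ^ 2 - 1 / 2 * b * t ^ 3 := by
  rcases le_total (b * r) a with hbr | hrb
  · exact ⟨r, hr, hbr, (min_le_right _ _).trans_eq (by ring)⟩
  · obtain ⟨t, ht, rfl, htr⟩ : ∃ t, 0 ≤ t ∧ b * t = a ∧ t ≤ r := by
      refine ⟨a / b, div_nonneg ha hb, ?_, div_le_of_le_mul₀ hb hr (by linarith)⟩
      rcases hb.eq_or_lt with rfl | hb
      · simp [le_antisymm (by simpa using hrb) ha]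
      · field_simp
    refine ⟨t, ht, le_rfl, (min_le_left _ _).trans ?_⟩
    nlinarith [mul_le_mul_of_nonneg_left (pow_le_pow_left₀ ht htr 2) (mul_nonneg hb ht)]

lemma integral_affine_le_integral {Ω : Type*} [MeasurableSpace Ω] {μ : Measure Ω}
    [IsProbabilityMeasure μ] {f g : Ω → ℝ} (hf : Integrable f μ) (hg : Integrable g μ) {α β : ℝ}
    (h : ∀ᵐ ω ∂μ, α * f ω + β ≤ g ω) :
    α * ∫ ω, f ω ∂μ + β ≤ ∫ ω, g ω ∂μ :=
  calc α * ∫ ω, f ω ∂μ + β = ∫ ω, α * f ω + β ∂μ := by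
        rw [integral_add (hf.const_mul α) (integrable_const β), integral_const_mul,
          integral_const, probReal_univ, smul_eq_mul, one_mul]
    _ ≤ ∫ ω, g ω ∂μ := integral_mono_ae ((hf.const_mul α).add (integrable_const β)) hg h

lemma integrable_min_sq_cube {Ω : Type*} [MeasurableSpace Ω] {μ : Measure Ω} {X : Ω → ℝ}
    (hX : Measurable X) (hXnn : ∀ ω, 0 ≤ X ω) (hX2 : Integrable (fun ω => X ω ^ 2) μ)
    {a b : ℝ} (ha : 0 ≤ a) (hb : 0 ≤ b) :
    Integrable (fun ω => min (3 / 2 * a * X ω ^ 2) (b * X ω ^ 3)) μ := by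
  refine (hX2.const_mul (3 / 2 * a)).mono' (by fun_prop) (ae_of_all _ fun ω => ?_)
  have := hXnn ω
  rw [norm_of_nonneg (le_min (by positivity) (by positivity))]
  exact min_le_left _ _

/-- For a nonnegative random variable `X` with `E[X²] < ∞` and constants `a, b ≥ 0`,
`min{a·E[X²], b·(E[X²])^{3/2}} ≤ E[min{(3/2)·a·X², b·X³}]`. -/
theorem stmt1 {Ω : Type*} [MeasurableSpace Ω] (ℙ : Measure Ω) [IsProbabilityMeasure ℙ]
    (X : Ω → ℝ) (hX : Measurable X) (hXnn : ∀ ω, 0 ≤ X ω)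
    (hX2 : Integrable (fun ω => X ω ^ 2) ℙ)
    (a b : ℝ) (ha : 0 ≤ a) (hb : 0 ≤ b) :
    min (a * ∫ ω, X ω ^ 2 ∂ℙ) (b * (∫ ω, X ω ^ 2 ∂ℙ) ^ ((3 : ℝ) / 2)) ≤
      ∫ ω, min ((3 / 2) * a * X ω ^ 2) (b * X ω ^ 3) ∂ℙ := by
  set m := ∫ ω, X ω ^ 2 ∂ℙ
  have hm : 0 ≤ m := integral_nonneg fun ω => sq_nonneg _
  obtain ⟨t, ht, hbt, hmin⟩ := exists_tangent_ge_min ha hb (sqrt_nonneg m)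
  rw [sq_sqrt hm] at hmin
  have hm32 : m ^ ((3 : ℝ) / 2) = √m ^ 3 := by
    rw [rpow_div_two_eq_sqrt _ hm, ← rpow_natCast]; norm_num
  rw [hm32]
  refine hmin.trans ?_
  simp only [sub_eq_add_neg]
  refine integral_affine_le_integral hX2 (integrable_min_sq_cube hX hXnn hX2 ha hb)
    (ae_of_all _ fun ω => ?_)
  simpa only [sub_eq_add_neg] using tangent_le_min hb ht hbt (hXnn ω)
end

section
/- For any constants c₁, c₃ > 0 and β ≥ 0, ∫₀^{π/2} min{2c₁, c₃·β / sin²α}·cos α dα ≤ 2·√(2·c₁·c₃·β). -/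
open Real MeasureTheory Set

/-!
After the substitution `s = sin α` the integral becomes `∫₀¹ min (2c₁) (K / s²) ds` with
`K = c₃β`. The two branches of the minimum meet at `s₀ = √(K / (2c₁))`; integrating `2c₁` up to
`s₀` and `K / s²` beyond it bounds the integral by `2c₁ s₀ + K / s₀ = 2√(2c₁K)`.
-/

theorem integrableOn_Icc_min_div_sq {a K : ℝ} (ha : 0 ≤ a) (hK : 0 ≤ K) (u v : ℝ) :
    IntegrableOn (fun s ↦ min a (K / s ^ 2)) (Icc u v) := by
  refine IntegrableOn.of_bound measure_Icc_lt_top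
    (measurable_const.min (measurable_const.div (measurable_id.pow_const 2))).aestronglyMeasurable a
    (Filter.Eventually.of_forall fun s ↦ ?_)
  rw [norm_of_nonneg (by positivity)]
  exact min_le_left _ _

theorem integral_min_div_sq_le_two_sqrt_mul {a K b : ℝ} (ha : 0 < a) (hK : 0 ≤ K)
    (hb : 0 ≤ b) :
    ∫ s in (0:ℝ)..b, min a (K / s ^ 2) ≤ 2 * √(a * K) := by
  rcases hK.eq_or_lt with rfl | hK
  · simp [min_eq_right ha.le]
  set s₀ := √K / √a
  have hs₀ : 0 < s₀ := by positivity
  set B := max b s₀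
  have hB : s₀ ≤ B := le_max_right _ _
  have hint := integrableOn_Icc_min_div_sq ha.le hK.le
  have head : ∫ s in (0:ℝ)..s₀, min a (K / s ^ 2) ≤ a * s₀ - a * 0 :=
    intervalIntegral.integral_le_sub_of_hasDeriv_right_of_le hs₀.le (by fun_prop)
      (fun x _ ↦ ((hasDerivAt_id x).const_mul a).hasDerivWithinAt.congr_deriv (mul_one a))
      (hint 0 s₀) (fun x _ ↦ min_le_left _ _)
  have tail : ∫ s in s₀..B, min a (K / s ^ 2) ≤ -K / B - -K / s₀ := by
    refine intervalIntegral.integral_le_sub_of_hasDeriv_right_of_le (g := fun x ↦ -K / x) hB ?_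
      (fun x hx ↦ ?_) (hint s₀ B) (fun x _ ↦ min_le_right _ _)
    · exact continuousOn_const.div continuousOn_id fun x hx ↦ (hs₀.trans_le hx.1).ne'
    · have hx0 : x ≠ 0 := (hs₀.trans hx.1).ne'
      simpa only [div_eq_mul_inv, neg_mul_neg] using
        ((hasDerivAt_inv hx0).const_mul (-K)).hasDerivWithinAt
  calc ∫ s in (0:ℝ)..b, min a (K / s ^ 2)
      ≤ ∫ s in (0:ℝ)..B, min a (K / s ^ 2) :=
        intervalIntegral.integral_mono_interval le_rfl hb (le_max_left _ _)
          (Filter.Eventually.of_forall fun s ↦ by positivity) (hint _ _).intervalIntegrable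
    _ = (∫ s in (0:ℝ)..s₀, min a (K / s ^ 2)) + ∫ s in s₀..B, min a (K / s ^ 2) :=
        (intervalIntegral.integral_add_adjacent_intervals (hint _ _).intervalIntegrable
          (hint _ _).intervalIntegrable).symm
    _ ≤ (a * s₀ - a * 0) + (-K / B - -K / s₀) := add_le_add head tail
    _ ≤ a * s₀ + K / s₀ := by
        have : 0 ≤ K / B := by positivity
        rw [neg_div, neg_div]
        linarith
    _ = 2 * √(a * K) := by
        have : √a ≠ 0 := by positivity
        have : √K ≠ 0 := by positivity
        simp only [s₀]
        rw [sqrt_mul ha.le]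
        field_simp
        rw [sq_sqrt ha.le, sq_sqrt hK.le]
        ring

/-- For constants `c₁, c₃ > 0` and `β ≥ 0`,
`∫₀^{π/2} min{2c₁, c₃·β/sin²α}·cos α dα ≤ 2·√(2·c₁·c₃·β)`. -/
theorem stmt3 (c₁ c₃ β : ℝ) (hc₁ : 0 < c₁) (hc₃ : 0 < c₃) (hβ : 0 ≤ β) :
    ∫ α in (0:ℝ)..(π / 2), min (2 * c₁) (c₃ * β / Real.sin α ^ 2) * Real.cos α ≤
      2 * Real.sqrt (2 * c₁ * c₃ * β) := by
  have hsubst : ∫ α in (0:ℝ)..(π / 2), min (2 * c₁) (c₃ * β / sin α ^ 2) * cos α =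
      ∫ s in (0:ℝ)..1, min (2 * c₁) (c₃ * β / s ^ 2) := by
    simpa using intervalIntegral.integral_comp_mul_deriv_of_deriv_nonneg
      (a := 0) (b := π / 2) (g := fun s ↦ min (2 * c₁) (c₃ * β / s ^ 2)) continuousOn_sin
      (fun x _ ↦ hasDerivAt_sin x) fun x hx ↦ by
        rw [min_eq_left pi_div_two_pos.le, max_eq_right pi_div_two_pos.le] at hx
        exact cos_nonneg_of_mem_Icc ⟨by linarith [hx.1, pi_pos], hx.2.le⟩
  rw [hsubst, mul_assoc]
  exact integral_min_div_sq_le_two_sqrt_mul (by positivity) (by positivity) zero_le_one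
end

section
/- For constants c₂, c₃ > 0, δ ≥ 0 and 0 < ε < π/2, ∫_ε^{π/2} min{ c₂·cos²α/sin α, c₃·δ·cos³α/sin²α } dα ≤ c₂·[1 + max{0, log( c₃δ / (2c₂·sin(ε/2)) )}]. -/
/-!
Both terms of the minimum are dominated by functions of `s = sin (α / 2)`: since
`sin α = 2 sin (α/2) cos (α/2)` and `0 ≤ cos α ≤ cos (α/2)`, the integrand is at most
`min (c₂ / s) (c₃ δ / (2 s²)) · ds/dα`. After the substitution it remains to integrate
`min (c₂ / s) (c₃ δ / (2 s²))` from `sin (ε/2)` upwards; bounding it by `c₂ / s` below the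
crossover point `s = c₃ δ / (2 c₂)` and by `c₃ δ / (2 s²)` above it gives the logarithm and the
constant `c₂` respectively.
-/

open Real MeasureTheory intervalIntegral Set

theorem intervalIntegral.integral_min_le_add {f g : ℝ → ℝ} {a m b : ℝ} (ham : a ≤ m) (hmb : m ≤ b)
    (hf : ContinuousOn f (Icc a b)) (hg : ContinuousOn g (Icc a b)) :
    ∫ x in a..b, min (f x) (g x) ≤ (∫ x in a..m, f x) + ∫ x in m..b, g x := by
  have integrable {u : ℝ → ℝ} (hu : ContinuousOn u (Icc a b)) {p q : ℝ} (hap : a ≤ p)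
      (hpq : p ≤ q) (hqb : q ≤ b) : IntervalIntegrable u volume p q :=
    (hu.mono (Icc_subset_Icc hap hqb)).intervalIntegrable_of_Icc hpq
  have hmin : ContinuousOn (fun x => min (f x) (g x)) (Icc a b) := by fun_prop
  rw [← integral_add_adjacent_intervals (integrable hmin le_rfl ham hmb)
    (integrable hmin ham hmb le_rfl)]
  exact add_le_add
    (integral_mono_on ham (integrable hmin le_rfl ham hmb) (integrable hf le_rfl ham hmb)
      fun x _ => min_le_left _ _)
    (integral_mono_on hmb (integrable hmin ham hmb le_rfl) (integrable hg ham hmb le_rfl)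
      fun x _ => min_le_right _ _)

theorem integral_div_two_mul_sq {K a b : ℝ} (ha : 0 < a) (hab : a ≤ b) :
    ∫ s in a..b, K / (2 * s ^ 2) = K / (2 * a) - K / (2 * b) := by
  have hpos : ∀ s ∈ uIcc a b, 0 < s := fun s hs => ha.trans_le (by
    rw [uIcc_of_le hab] at hs; exact hs.1)
  rw [integral_eq_sub_of_hasDerivAt (f := fun s => -(K / 2) * s⁻¹)]
  · ring
  · exact fun s hs =>
      ((hasDerivAt_inv (hpos s hs).ne').const_mul (-(K / 2))).congr_deriv (by ring)
  · exact ContinuousOn.intervalIntegrable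
      (by fun_prop (disch := exact fun s hs => by have := hpos s hs; positivity))

theorem integral_min_div_le {c K s₀ s₁ : ℝ} (hc : 0 < c) (hK : 0 ≤ K) (hs₀ : 0 < s₀)
    (hs₀₁ : s₀ ≤ s₁) :
    ∫ s in s₀..s₁, min (c / s) (K / (2 * s ^ 2)) ≤ c * (1 + max 0 (log (K / (2 * c * s₀)))) := by
  set σ := min s₁ (max s₀ (K / (2 * c)))
  have hσ₀ : s₀ ≤ σ := le_min hs₀₁ (le_max_left _ _)
  have hσ₁ : σ ≤ s₁ := min_le_left _ _
  have hσ : 0 < σ := hs₀.trans_le hσ₀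
  have hlog : log (σ / s₀) ≤ max 0 (log (K / (2 * c * s₀))) := by
    rcases le_or_gt σ s₀ with hle | hlt
    · exact (log_nonpos (by positivity) ((div_le_one hs₀).mpr hle)).trans (le_max_left _ _)
    · have hσK : σ ≤ K / (2 * c) :=
        (le_max_iff.mp (min_le_right _ _)).resolve_left (not_le.mpr hlt)
      refine (log_le_log (by positivity) ?_).trans (le_max_right _ _)
      rw [← div_div]
      exact div_le_div_of_nonneg_right hσK hs₀.le
  have htail : K / (2 * σ) - K / (2 * s₁) ≤ c := by
    rcases min_choice s₁ (max s₀ (K / (2 * c))) with h | h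
    · rw [show σ = s₁ from h, sub_self]; exact hc.le
    · have hKσ : K / (2 * c) ≤ σ := (le_max_right _ _).trans_eq h.symm
      have : K / (2 * σ) ≤ c := by
        rw [div_le_iff₀ (by positivity)]
        rw [div_le_iff₀ (by positivity)] at hKσ
        linarith
      have hs₁ : 0 < s₁ := hσ.trans_le hσ₁
      linarith [show 0 ≤ K / (2 * s₁) by positivity]
  have hcont : ∀ u : ℝ → ℝ, (∀ s, 0 < s → ContinuousAt u s) → ContinuousOn u (Icc s₀ s₁) :=
    fun u hu => fun s hs => (hu s (hs₀.trans_le hs.1)).continuousWithinAt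
  calc ∫ s in s₀..s₁, min (c / s) (K / (2 * s ^ 2))
      ≤ (∫ s in s₀..σ, c / s) + ∫ s in σ..s₁, K / (2 * s ^ 2) :=
        integral_min_le_add hσ₀ hσ₁
          (hcont _ fun s hs => by fun_prop (disch := positivity))
          (hcont _ fun s hs => by fun_prop (disch := positivity))
    _ = c * log (σ / s₀) + (K / (2 * σ) - K / (2 * s₁)) := by
        simp only [div_eq_mul_inv c, intervalIntegral.integral_const_mul,
          integral_inv_of_pos hs₀ hσ, integral_div_two_mul_sq hσ hσ₁]
    _ ≤ c * max 0 (log (K / (2 * c * s₀))) + c := by gcongr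
    _ = c * (1 + max 0 (log (K / (2 * c * s₀)))) := by ring

section HalfAngle

variable {α : ℝ}

theorem cos_le_cos_half (hα : 0 ≤ α) (hα' : α ≤ π) : cos α ≤ cos (α / 2) :=
  cos_le_cos_of_nonneg_of_le_pi (by linarith) hα' (by linarith)

theorem sin_eq_two_mul_sin_half_mul_cos_half (α : ℝ) : sin α = 2 * sin (α / 2) * cos (α / 2) := by
  rw [← sin_two_mul]; ring_nf

variable (hα : 0 < α) (hα' : α ≤ π / 2)
include hα hα'

theorem cos_sq_div_sin_le :
    cos α ^ 2 / sin α ≤ cos (α / 2) / (2 * sin (α / 2)) := by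
  have hs : 0 < sin (α / 2) := sin_pos_of_pos_of_lt_pi (by linarith) (by linarith [pi_pos])
  have hc : 0 < cos (α / 2) := cos_pos_of_mem_Ioo ⟨by linarith [pi_pos], by linarith [pi_pos]⟩
  have hcos : 0 ≤ cos α := cos_nonneg_of_mem_Icc ⟨by linarith [pi_pos], hα'⟩
  calc cos α ^ 2 / sin α = cos α ^ 2 / (2 * sin (α / 2) * cos (α / 2)) := by
        rw [sin_eq_two_mul_sin_half_mul_cos_half]
    _ ≤ cos (α / 2) ^ 2 / (2 * sin (α / 2) * cos (α / 2)) := by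
        gcongr; exact cos_le_cos_half hα.le (by linarith [pi_pos])
    _ = cos (α / 2) / (2 * sin (α / 2)) := by field_simp

theorem cos_pow_three_div_sin_sq_le :
    cos α ^ 3 / sin α ^ 2 ≤ cos (α / 2) / (4 * sin (α / 2) ^ 2) := by
  have hs : 0 < sin (α / 2) := sin_pos_of_pos_of_lt_pi (by linarith) (by linarith [pi_pos])
  have hc : 0 < cos (α / 2) := cos_pos_of_mem_Ioo ⟨by linarith [pi_pos], by linarith [pi_pos]⟩
  have hcos : 0 ≤ cos α := cos_nonneg_of_mem_Icc ⟨by linarith [pi_pos], hα'⟩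
  calc cos α ^ 3 / sin α ^ 2 = cos α ^ 3 / (4 * sin (α / 2) ^ 2 * cos (α / 2) ^ 2) := by
        rw [sin_eq_two_mul_sin_half_mul_cos_half]; ring
    _ ≤ cos (α / 2) ^ 3 / (4 * sin (α / 2) ^ 2 * cos (α / 2) ^ 2) := by
        gcongr; exact cos_le_cos_half hα.le (by linarith [pi_pos])
    _ = cos (α / 2) / (4 * sin (α / 2) ^ 2) := by field_simp

theorem min_div_sin_le_min_div_sin_half_mul {c K : ℝ} (hc : 0 ≤ c) (hK : 0 ≤ K) :
    min (c * cos α ^ 2 / sin α) (K * cos α ^ 3 / sin α ^ 2) ≤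
      min (c / sin (α / 2)) (K / (2 * sin (α / 2) ^ 2)) * (cos (α / 2) / 2) := by
  have hc' : 0 ≤ cos (α / 2) := cos_nonneg_of_mem_Icc ⟨by linarith [pi_pos], by linarith⟩
  rw [min_mul_of_nonneg _ _ (by positivity)]
  refine min_le_min ?_ ?_
  · calc c * cos α ^ 2 / sin α = c * (cos α ^ 2 / sin α) := mul_div_assoc _ _ _
      _ ≤ c * (cos (α / 2) / (2 * sin (α / 2))) :=
          mul_le_mul_of_nonneg_left (cos_sq_div_sin_le hα hα') hc
      _ = c / sin (α / 2) * (cos (α / 2) / 2) := by ring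
  · calc K * cos α ^ 3 / sin α ^ 2 = K * (cos α ^ 3 / sin α ^ 2) := mul_div_assoc _ _ _
      _ ≤ K * (cos (α / 2) / (4 * sin (α / 2) ^ 2)) :=
          mul_le_mul_of_nonneg_left (cos_pow_three_div_sin_sq_le hα hα') hK
      _ = K / (2 * sin (α / 2) ^ 2) * (cos (α / 2) / 2) := by ring

end HalfAngle

theorem integral_comp_sin_half_mul {g : ℝ → ℝ} {a b : ℝ}
    (hg : ContinuousOn g ((fun x => sin (x / 2)) '' uIcc a b)) :
    ∫ x in a..b, g (sin (x / 2)) * (cos (x / 2) / 2) = ∫ s in sin (a / 2)..sin (b / 2), g s :=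
  integral_comp_mul_deriv' (fun x _ => by simpa [div_eq_mul_inv] using
    ((hasDerivAt_id x).div_const 2).sin) (by fun_prop) hg

/-- For `c₂, c₃ > 0`, `δ ≥ 0` and `0 < ε < π/2`,
`∫_ε^{π/2} min{c₂·cos²α/sin α, c₃·δ·cos³α/sin²α} dα
  ≤ c₂·[1 + max{0, log(c₃δ/(2c₂·sin(ε/2)))}]`. -/
theorem stmt4 (c₂ c₃ δ ε : ℝ) (hc₂ : 0 < c₂) (hc₃ : 0 < c₃) (hδ : 0 ≤ δ)
    (hε : 0 < ε) (hε' : ε < π / 2) :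
    ∫ α in ε..(π / 2),
        min (c₂ * Real.cos α ^ 2 / Real.sin α) (c₃ * δ * Real.cos α ^ 3 / Real.sin α ^ 2) ≤
      c₂ * (1 + max 0 (Real.log (c₃ * δ / (2 * c₂ * Real.sin (ε / 2))))) := by
  have hα : ∀ α ∈ uIcc ε (π / 2), 0 < α ∧ α ≤ π / 2 := fun α hα => by
    rw [uIcc_of_le hε'.le] at hα; exact ⟨hε.trans_le hα.1, hα.2⟩
  have hsin : ∀ α ∈ uIcc ε (π / 2), 0 < sin α := fun α h =>
    sin_pos_of_pos_of_lt_pi (hα α h).1 (by linarith [(hα α h).2, pi_pos])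
  have hsin_half : ∀ α ∈ uIcc ε (π / 2), 0 < sin (α / 2) := fun α h =>
    sin_pos_of_pos_of_lt_pi (by linarith [(hα α h).1]) (by linarith [(hα α h).2, pi_pos])
  set g : ℝ → ℝ := fun s => min (c₂ / s) (c₃ * δ / (2 * s ^ 2))
  have hg : ContinuousOn g ((fun α => sin (α / 2)) '' uIcc ε (π / 2)) := by
    rintro _ ⟨α, h, rfl⟩
    have := hsin_half α h
    exact (by fun_prop (disch := positivity) : ContinuousAt g _).continuousWithinAt
  calc _ ≤ ∫ α in ε..(π / 2), g (sin (α / 2)) * (cos (α / 2) / 2) := by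
        refine integral_mono_on hε'.le ?_ ?_ fun α h => ?_
        · exact ContinuousOn.intervalIntegrable (by
            fun_prop (disch := intro α h; have := hsin α h; positivity))
        · exact ContinuousOn.intervalIntegrable
            ((hg.comp (by fun_prop) (mapsTo_image _ _)).mul (by fun_prop))
        · exact min_div_sin_le_min_div_sin_half_mul (hα α (Icc_subset_uIcc h)).1
            (hα α (Icc_subset_uIcc h)).2 hc₂.le (by positivity)
    _ = ∫ s in sin (ε / 2)..sin (π / 2 / 2), g s := integral_comp_sin_half_mul hg
    _ ≤ _ := integral_min_div_le hc₂ (by positivity) (hsin_half ε left_mem_uIcc)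
        (sin_le_sin_of_le_of_le_pi_div_two (by linarith) (by linarith [pi_pos]) (by linarith))
end

section
/- Let X₁, …, X_n be independent ℝ^d-valued random vectors with E[X_i] = 0, Σᵢ E|X_i|² < ∞, and Var(Σᵢ X_i) = I_d. Set W = Σᵢ X_i and W_i = W − X_i. Then for every continuously differentiable F : ℝ^d → ℝ^d with bounded derivative, E[⟨F(W), W⟩] = Σᵢ ∫₀¹ E[⟨∇F(W_i + t·X_i), X_i ⊗ X_i⟩] dt, where ⟨∇F(w), x ⊗ x⟩ = ⟨∇F(w)x, x⟩ denotes the quadratic form of the Jacobian. -/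
/-! Expand `⟪F W, W⟫ = ∑ᵢ ⟪F W, Xᵢ⟫`. Since `W - Xᵢ` is independent of the centred `Xᵢ`,
`E⟪F (W - Xᵢ), Xᵢ⟫ = ⟪E F (W - Xᵢ), E Xᵢ⟫ = 0`, so `E⟪F W, Xᵢ⟫ = E⟪F W - F (W - Xᵢ), Xᵢ⟫`.
The fundamental theorem of calculus on the segment from `W - Xᵢ` to `W` turns this into the
`i`-th summand, after swapping the two integrals: the integrand is dominated by
`sup ‖∇F‖ · ‖Xᵢ‖²`, and the `Xᵢ` are square integrable. -/

open MeasureTheory ProbabilityTheory RealInnerProductSpace intervalIntegral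

section

variable {E : Type*} [NormedAddCommGroup E] {Ω : Type*} [MeasurableSpace Ω] {P : Measure Ω}

theorem LipschitzWith.comp_memLp' [IsFiniteMeasure P] {G : Type*} [NormedAddCommGroup G]
    {K : NNReal} {F : E → G} (hF : LipschitzWith K F) {f : Ω → E} {p : ENNReal}
    (hf : MemLp f p P) : MemLp (fun ω => F (f ω)) p P := by
  have h0 : LipschitzWith K (fun x => F x - F 0) := by
    simpa using hF.sub (LipschitzWith.const (F 0))
  convert (h0.comp_memLp (by simp) hf).add (memLp_const (F 0)) using 1
  ext ω
  simp

variable [InnerProductSpace ℝ E]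

theorem inner_add_sub_inner_eq_integral_fderiv {F : E → E} (hF : ContDiff ℝ 1 F) (w x : E) :
    ⟪F (w + x), x⟫ - ⟪F w, x⟫ = ∫ t in (0:ℝ)..1, ⟪fderiv ℝ F (w + t • x) x, x⟫ := by
  have hpath (t : ℝ) : HasDerivAt (fun s : ℝ => w + s • x) x t := by
    simpa using ((hasDerivAt_id t).smul_const x).const_add w
  have hderiv (t : ℝ) : HasDerivAt (fun s : ℝ => ⟪F (w + s • x), x⟫)
      ⟪fderiv ℝ F (w + t • x) x, x⟫ t := by
    simpa using ((hF.differentiable one_ne_zero _).hasFDerivAt.comp_hasDerivAt t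
      (hpath t)).inner ℝ (hasDerivAt_const t x)
  have hcont : Continuous fun t : ℝ => ⟪fderiv ℝ F (w + t • x) x, x⟫ := by
    have := hF.continuous_fderiv one_ne_zero
    fun_prop
  rw [integral_eq_sub_of_hasDerivAt (fun t _ => hderiv t) (hcont.intervalIntegrable 0 1)]
  simp

theorem ContinuousLinearMap.norm_inner_apply_self_le (L : E →L[ℝ] E) (x : E) :
    ‖⟪L x, x⟫‖ ≤ ‖L‖ * ‖x‖ ^ 2 := by
  calc ‖⟪L x, x⟫‖ ≤ ‖L x‖ * ‖x‖ := norm_inner_le_norm _ _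
    _ ≤ ‖L‖ * ‖x‖ * ‖x‖ := by gcongr; exact L.le_opNorm x
    _ = ‖L‖ * ‖x‖ ^ 2 := by ring

theorem MeasureTheory.MemLp.integrable_inner {f g : Ω → E} (hf : MemLp f 2 P)
    (hg : MemLp g 2 P) : Integrable (fun ω => ⟪f ω, g ω⟫) P := by
  rw [← memLp_one_iff_integrable]
  refine hf.of_bilin (fun a b => ⟪a, b⟫) 1 hg (hf.1.inner hg.1) (ae_of_all _ fun ω => ?_)
  simpa using nnnorm_inner_le_nnnorm (𝕜 := ℝ) (f ω) (g ω)

theorem integrable_inner_fderiv_segment [SFinite P] {ν : Measure ℝ} [IsFiniteMeasure ν]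
    {Y X : Ω → E} (hY : AEStronglyMeasurable Y P) (hX : MemLp X 2 P) {F : E → E}
    (hF : ContDiff ℝ 1 F) {K : NNReal} (hK : ∀ w, ‖fderiv ℝ F w‖₊ ≤ K) :
    Integrable (fun p : ℝ × Ω => ⟪fderiv ℝ F (Y p.2 + p.1 • X p.2) (X p.2), X p.2⟫)
      (ν.prod P) := by
  have hbound : Integrable (fun p : ℝ × Ω => K * ‖X p.2‖ ^ 2) (ν.prod P) :=
    (((memLp_two_iff_integrable_sq_norm hX.1).1 hX).const_mul K).comp_snd ν
  have hcont : Continuous fun q : ℝ × E × E =>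
      ⟪fderiv ℝ F (q.2.1 + q.1 • q.2.2) q.2.2, q.2.2⟫ := by
    have := hF.continuous_fderiv one_ne_zero
    fun_prop
  have hargs : AEStronglyMeasurable (fun p : ℝ × Ω => (p.1, Y p.2, X p.2)) (ν.prod P) :=
    measurable_fst.aestronglyMeasurable.prodMk (hY.comp_snd.prodMk hX.1.comp_snd)
  refine hbound.mono' (hcont.comp_aestronglyMeasurable hargs)
    (ae_of_all _ fun p => (ContinuousLinearMap.norm_inner_apply_self_le _ _).trans ?_)
  gcongr
  exact hK _

theorem ProbabilityTheory.IndepFun.integral_inner_comp_add_eq_integral_fderiv [CompleteSpace E]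
    [MeasurableSpace E] [BorelSpace E] [IsProbabilityMeasure P] {Y X : Ω → E}
    (hYX : Y ⟂ᵢ[P] X) (hY : MemLp Y 2 P) (hX : MemLp X 2 P) (hmean : ∫ ω, X ω ∂P = 0)
    {F : E → E} (hF : ContDiff ℝ 1 F) {K : NNReal} (hK : ∀ w, ‖fderiv ℝ F w‖₊ ≤ K) :
    ∫ ω, ⟪F (Y ω + X ω), X ω⟫ ∂P =
      ∫ t in (0:ℝ)..1, ∫ ω, ⟪fderiv ℝ F (Y ω + t • X ω) (X ω), X ω⟫ ∂P := by
  have hlip : LipschitzWith K F :=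
    lipschitzWith_of_nnnorm_fderiv_le (hF.differentiable one_ne_zero) hK
  have hFY : MemLp (fun ω => F (Y ω)) 2 P := hlip.comp_memLp' hY
  have hFYX : MemLp (fun ω => F (Y ω + X ω)) 2 P := hlip.comp_memLp' (hY.add hX)
  have hcentred : ∫ ω, ⟪F (Y ω), X ω⟫ ∂P = 0 := by
    have h := (hYX.comp hF.continuous.measurable measurable_id).integral_bilin
      (hFY.integrable one_le_two) (hX.integrable one_le_two) (innerSL ℝ)
    simp only [Function.comp_def, id] at h
    exact h.trans (by simp [hmean])
  have : IsFiniteMeasure (volume.restrict (Set.uIoc (0:ℝ) 1)) :=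
    isFiniteMeasure_restrict.2 (by simp)
  have hswap := integrable_inner_fderiv_segment hY.1 hX hF hK
    (ν := volume.restrict (Set.uIoc (0:ℝ) 1))
  calc ∫ ω, ⟪F (Y ω + X ω), X ω⟫ ∂P
      = ∫ ω, (⟪F (Y ω + X ω), X ω⟫ - ⟪F (Y ω), X ω⟫) ∂P := by
        rw [integral_sub (hFYX.integrable_inner hX) (hFY.integrable_inner hX), hcentred,
          sub_zero]
    _ = ∫ ω, (∫ t in (0:ℝ)..1, ⟪fderiv ℝ F (Y ω + t • X ω) (X ω), X ω⟫) ∂P := by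
        simp only [inner_add_sub_inner_eq_integral_fderiv hF]
    _ = _ := (intervalIntegral_integral_swap hswap).symm

end

theorem stmt12_general {d n : ℕ} {Ω : Type*} [MeasurableSpace Ω] (P : Measure Ω)
    [IsProbabilityMeasure P]
    (X : Fin n → Ω → EuclideanSpace ℝ (Fin d))
    (hXm : ∀ i, Measurable (X i))
    (hindep : iIndepFun X P)
    (hX2 : ∀ i, Integrable (fun ω => ‖X i ω‖ ^ 2) P)
    (hmean : ∀ i, ∫ ω, X i ω ∂P = 0)
    (W : Ω → EuclideanSpace ℝ (Fin d)) (hW : ∀ ω, W ω = ∑ i, X i ω)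
    (F : EuclideanSpace ℝ (Fin d) → EuclideanSpace ℝ (Fin d))
    (hF : ContDiff ℝ 1 F) (hF' : ∃ C, ∀ w, ‖fderiv ℝ F w‖ ≤ C) :
    ∫ ω, ⟪F (W ω), W ω⟫ ∂P =
      ∑ i, ∫ t in (0:ℝ)..1,
        ∫ ω, ⟪fderiv ℝ F (W ω - X i ω + t • X i ω) (X i ω), X i ω⟫ ∂P := by
  obtain ⟨C, hC⟩ := hF'
  have hK : ∀ w, ‖fderiv ℝ F w‖₊ ≤ C.toNNReal := fun w => by
    simpa [← NNReal.coe_le_coe] using (hC w).trans (le_max_left C 0)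
  have hX : ∀ i, MemLp (X i) 2 P := fun i =>
    (memLp_two_iff_integrable_sq_norm (hXm i).aestronglyMeasurable).2 (hX2 i)
  have hWsum : W = ∑ i, X i := funext fun ω => by simp [hW]
  have hrest (i : Fin n) : (fun ω => W ω - X i ω) = ∑ j ∈ Finset.univ.erase i, X j := by
    rw [hWsum, ← Finset.add_sum_erase _ _ (Finset.mem_univ i)]
    ext ω
    simp
  have hFW : MemLp (fun ω => F (W ω)) 2 P :=
    (lipschitzWith_of_nnnorm_fderiv_le (hF.differentiable one_ne_zero) hK).comp_memLp'
      (hWsum ▸ memLp_finsetSum' _ fun i _ => hX i)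
  calc ∫ ω, ⟪F (W ω), W ω⟫ ∂P = ∫ ω, ∑ i, ⟪F (W ω), X i ω⟫ ∂P := by
        simp only [← inner_sum, ← hW]
    _ = ∑ i, ∫ ω, ⟪F (W ω), X i ω⟫ ∂P :=
        integral_finsetSum _ fun i _ => hFW.integrable_inner (hX i)
    _ = _ := Finset.sum_congr rfl fun i _ => by
        have hYX : (fun ω => W ω - X i ω) ⟂ᵢ[P] X i := hrest i ▸
          hindep.indepFun_finsetSum_of_notMem hXm (Finset.notMem_erase i Finset.univ)
        have hY : MemLp (fun ω => W ω - X i ω) 2 P :=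
          hrest i ▸ memLp_finsetSum' _ fun j _ => hX j
        simpa using hYX.integral_inner_comp_add_eq_integral_fderiv hY (hX i) (hmean i) hF hK

/-- For independent centered random vectors `X₁, …, X_n` with `W = Σᵢ Xᵢ` of identity
covariance, and any `C¹` map `F : ℝ^d → ℝ^d` with bounded derivative,
`E[⟨F(W), W⟩] = Σᵢ ∫₀¹ E[⟨∇F(W − Xᵢ + t·Xᵢ)Xᵢ, Xᵢ⟩] dt`. -/
theorem stmt12 {d n : ℕ} {Ω : Type*} [MeasurableSpace Ω] (P : Measure Ω)
    [IsProbabilityMeasure P]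
    (X : Fin n → Ω → EuclideanSpace ℝ (Fin d))
    (hXm : ∀ i, Measurable (X i))
    (hindep : iIndepFun X P)
    (hX2 : ∀ i, Integrable (fun ω => ‖X i ω‖ ^ 2) P)
    (hmean : ∀ i, ∫ ω, X i ω ∂P = 0)
    (hcov : ∀ k l, (∑ i, ∫ ω, X i ω k * X i ω l ∂P) = if k = l then 1 else 0)
    (W : Ω → EuclideanSpace ℝ (Fin d)) (hW : ∀ ω, W ω = ∑ i, X i ω)
    (F : EuclideanSpace ℝ (Fin d) → EuclideanSpace ℝ (Fin d))
    (hF : ContDiff ℝ 1 F) (hF' : ∃ C, ∀ w, ‖fderiv ℝ F w‖ ≤ C) :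
    ∫ ω, ⟪F (W ω), W ω⟫ ∂P =
      ∑ i, ∫ t in (0:ℝ)..1,
        ∫ ω, ⟪fderiv ℝ F (W ω - X i ω + t • X i ω) (X i ω), X i ω⟫ ∂P :=
  stmt12_general P X hXm hindep hX2 hmean W hW F hF hF'
end

section
/- (Banach's theorem on symmetric tensors) Let V be a finite-dimensional normed space with dual V′. If φ ∈ V^{⊗r} is a symmetric tensor, then its injective norm satisfies |φ|_∨ = sup_{|v′|′ ≤ 1} |⟨φ, (v′)^{⊗r}⟩|; i.e., the supremum of |⟨φ, v′₁ ⊗ ⋯ ⊗ v′_r⟩| over unit vectors v′₁, …, v′_r is attained on the diagonal. -/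
open Function Finset Metric RealInnerProductSpace

private lemma sum_split18 {r : ℕ} (p q : Fin r) (hqp : q ≠ p) (F : Fin r → ℝ) :
    ∑ z, F z = F p + F q + ∑ z ∈ (Finset.univ.erase p).erase q, F z := by
  have h1 := Finset.add_sum_erase Finset.univ F (Finset.mem_univ p)
  have h2 := Finset.add_sum_erase (Finset.univ.erase p) F
    (Finset.mem_erase.2 ⟨hqp, Finset.mem_univ q⟩)
  rw [← h1, ← h2]; ring

private lemma g_split18 {d r : ℕ} (w : Fin r → EuclideanSpace ℝ (Fin d)) (p q : Fin r)
    (hqp : q ≠ p) (a b : EuclideanSpace ℝ (Fin d)) :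
    (∑ z : Fin r, ∑ z' : Fin r,
        (⟪Function.update (Function.update w q b) p a z,
          Function.update (Function.update w q b) p a z'⟫)^2)
      = (⟪a,a⟫)^2 + (⟪a,b⟫)^2 + (⟪b,a⟫)^2 + (⟪b,b⟫)^2
        + (∑ z ∈ (Finset.univ.erase p).erase q, (⟪a, w z⟫)^2)
        + (∑ z ∈ (Finset.univ.erase p).erase q, (⟪w z, a⟫)^2)
        + (∑ z ∈ (Finset.univ.erase p).erase q, (⟪b, w z⟫)^2)
        + (∑ z ∈ (Finset.univ.erase p).erase q, (⟪w z, b⟫)^2)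
        + ∑ z ∈ (Finset.univ.erase p).erase q, ∑ z' ∈ (Finset.univ.erase p).erase q,
            (⟪w z, w z'⟫)^2 := by
  classical
  set s : Finset (Fin r) := (Finset.univ.erase p).erase q with hs
  set v : Fin r → EuclideanSpace ℝ (Fin d) :=
    Function.update (Function.update w q b) p a with hv
  have hvp : v p = a := by rw [hv]; simp
  have hvq : v q = b := by
    rw [hv, Function.update_of_ne hqp, Function.update_self]
  have hvz : ∀ z ∈ s, v z = w z := by
    intro z hz
    rw [hs] at hz
    obtain ⟨hzq, hz'⟩ := Finset.mem_erase.1 hz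
    obtain ⟨hzp, _⟩ := Finset.mem_erase.1 hz'
    rw [hv, Function.update_of_ne hzp, Function.update_of_ne hzq]
  have H : (∑ z : Fin r, ∑ z' : Fin r, (⟪v z, v z'⟫)^2)
      = (∑ z' : Fin r, (⟪v p, v z'⟫)^2) + (∑ z' : Fin r, (⟪v q, v z'⟫)^2)
        + ∑ z ∈ s, ∑ z' : Fin r, (⟪v z, v z'⟫)^2 := sum_split18 p q hqp _
  have H1 : (∑ z' : Fin r, (⟪v p, v z'⟫)^2)
      = (⟪v p, v p⟫)^2 + (⟪v p, v q⟫)^2 + ∑ z' ∈ s, (⟪v p, v z'⟫)^2 :=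
    sum_split18 p q hqp _
  have H2 : (∑ z' : Fin r, (⟪v q, v z'⟫)^2)
      = (⟪v q, v p⟫)^2 + (⟪v q, v q⟫)^2 + ∑ z' ∈ s, (⟪v q, v z'⟫)^2 :=
    sum_split18 p q hqp _
  have H3 : (∑ z ∈ s, ∑ z' : Fin r, (⟪v z, v z'⟫)^2)
      = ∑ z ∈ s, ((⟪v z, v p⟫)^2 + (⟪v z, v q⟫)^2 + ∑ z' ∈ s, (⟪v z, v z'⟫)^2) :=
    Finset.sum_congr rfl fun z _ => sum_split18 p q hqp _
  rw [H, H1, H2, H3, Finset.sum_add_distrib, Finset.sum_add_distrib]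
  simp only [hvp, hvq]
  have e1 : ∀ aa : EuclideanSpace ℝ (Fin d),
      (∑ z' ∈ s, (⟪aa, v z'⟫)^2) = ∑ z' ∈ s, (⟪aa, w z'⟫)^2 :=
    fun aa => Finset.sum_congr rfl fun z hz => by rw [hvz z hz]
  have e2 : ∀ aa : EuclideanSpace ℝ (Fin d),
      (∑ z ∈ s, (⟪v z, aa⟫)^2) = ∑ z ∈ s, (⟪w z, aa⟫)^2 :=
    fun aa => Finset.sum_congr rfl fun z hz => by rw [hvz z hz]
  have e3 : (∑ z ∈ s, ∑ z' ∈ s, (⟪v z, v z'⟫)^2)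
      = ∑ z ∈ s, ∑ z' ∈ s, (⟪w z, w z'⟫)^2 :=
    Finset.sum_congr rfl fun z hz => by rw [hvz z hz]; exact e1 (w z)
  rw [e1 a, e1 b, e2 a, e2 b, e3]
  ring

private lemma core18 {d r : ℕ}
    (A : ContinuousMultilinearMap ℝ (fun _ : Fin r => EuclideanSpace ℝ (Fin d)) ℝ)
    (hsymm : ∀ (v : Fin r → EuclideanSpace ℝ (Fin d)) (σ : Equiv.Perm (Fin r)),
      A (v ∘ σ) = A v)
    {M : ℝ}
    (hdiag : ∀ u : EuclideanSpace ℝ (Fin d), ‖u‖ ≤ 1 → |A (fun _ => u)| ≤ M) :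
    ∀ v : Fin r → EuclideanSpace ℝ (Fin d), (∀ i, ‖v i‖ ≤ 1) → |A v| ≤ M := by
  classical
  by_cases hr : r = 0
  · subst hr
    intro v _
    have hv : v = (fun _ => (0 : EuclideanSpace ℝ (Fin d))) := funext fun i => i.elim0
    rw [hv]; exact hdiag 0 (by simp)
  have hrpos : 0 < r := Nat.pos_of_ne_zero hr
  set K : Set (Fin r → EuclideanSpace ℝ (Fin d)) := {v | ∀ i, ‖v i‖ ≤ 1} with hKdef
  have hKmem : ∀ v : Fin r → EuclideanSpace ℝ (Fin d), (∀ i, ‖v i‖ ≤ 1) → v ∈ K :=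
    fun v h => by rw [hKdef]; exact h
  have hKmem' : ∀ v : Fin r → EuclideanSpace ℝ (Fin d), v ∈ K → (∀ i, ‖v i‖ ≤ 1) :=
    fun v h => by rw [hKdef] at h; exact h
  have hKc : IsCompact K := by
    have hKeq : K = Set.univ.pi
        (fun _ : Fin r => Metric.closedBall (0 : EuclideanSpace ℝ (Fin d)) 1) := by
      ext v; simp [hKdef, Set.mem_univ_pi, mem_closedBall_zero_iff]
    rw [hKeq]
    exact isCompact_univ_pi fun _ => isCompact_closedBall _ _
  have hKne : K.Nonempty := ⟨fun _ => 0, hKmem _ fun i => by simp⟩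
  have hAc : Continuous fun v : Fin r → EuclideanSpace ℝ (Fin d) => |A v| := A.cont.abs
  obtain ⟨w₀, hw₀K, hw₀max⟩ := hKc.exists_isMaxOn hKne hAc.continuousOn
  rw [isMaxOn_iff] at hw₀max
  set N := |A w₀| with hNdef
  have hmax : ∀ v ∈ K, |A v| ≤ N := hw₀max
  suffices hNM : N ≤ M by
    intro v hv
    exact le_trans (hmax v (hKmem v hv)) hNM
  rcases le_or_gt N 0 with hN0 | hNpos
  · exact le_trans hN0 (le_trans (abs_nonneg _) (hdiag 0 (by simp)))
  -- a maximizer with positive value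
  have hexistsPos : ∃ w₁ ∈ K, A w₁ = N := by
    rcases abs_cases (A w₀) with ⟨h1, _⟩ | ⟨h1, _⟩
    · exact ⟨w₀, hw₀K, by rw [hNdef, h1]⟩
    · refine ⟨Function.update w₀ ⟨0, hrpos⟩ (-(w₀ ⟨0, hrpos⟩)), ?_, ?_⟩
      · refine hKmem _ fun i => ?_
        by_cases hi : i = ⟨0, hrpos⟩
        · subst hi; rw [Function.update_self, norm_neg]; exact hKmem' _ hw₀K _
        · rw [Function.update_of_ne hi]; exact hKmem' _ hw₀K i
      · have hne : -(w₀ ⟨0, hrpos⟩) = (-1 : ℝ) • (w₀ ⟨0, hrpos⟩) := by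
          rw [neg_one_smul]
        rw [hne, A.map_update_smul w₀ ⟨0, hrpos⟩ (-1) (w₀ ⟨0, hrpos⟩),
          Function.update_eq_self, smul_eq_mul, hNdef, h1]
        ring
  obtain ⟨w₁, hw₁K, hw₁A⟩ := hexistsPos
  set P : Set (Fin r → EuclideanSpace ℝ (Fin d)) := K ∩ {v | A v = N} with hPdef
  have hPc : IsCompact P := hKc.inter_right (isClosed_eq A.cont continuous_const)
  have hPne : P.Nonempty := ⟨w₁, ⟨hw₁K, hw₁A⟩⟩
  set g : (Fin r → EuclideanSpace ℝ (Fin d)) → ℝ :=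
    fun v => ∑ z : Fin r, ∑ z' : Fin r, (⟪v z, v z'⟫)^2 with hgdef
  have hgc : Continuous g := by
    rw [hgdef]
    refine continuous_finset_sum _ fun z _ => continuous_finset_sum _ fun z' _ => ?_
    exact ((continuous_apply z).inner (continuous_apply z')).pow 2
  obtain ⟨w, hwP, hwg⟩ := hPc.exists_isMaxOn hPne hgc.continuousOn
  rw [isMaxOn_iff] at hwg
  obtain ⟨hwK, hwA⟩ := hwP
  replace hwA : A w = N := hwA
  -- all slots are unit vectors
  have hunit : ∀ p, ‖w p‖ = 1 := by
    intro p
    by_contra hne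
    have hle : ‖w p‖ ≤ 1 := hKmem' _ hwK p
    have hlt : ‖w p‖ < 1 := lt_of_le_of_ne hle hne
    have hwp0 : w p ≠ 0 := by
      intro h0
      have h1 : A w = 0 := A.map_coord_zero p h0
      rw [h1] at hwA
      exact hNpos.ne' hwA.symm
    have htpos : 0 < ‖w p‖ := norm_pos_iff.2 hwp0
    have h1 : A (Function.update w p (‖w p‖⁻¹ • w p)) = ‖w p‖⁻¹ * A w := by
      rw [A.map_update_smul w p (‖w p‖⁻¹) (w p), Function.update_eq_self, smul_eq_mul]
    have hK' : Function.update w p (‖w p‖⁻¹ • w p) ∈ K := by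
      refine hKmem _ fun i => ?_
      by_cases hi : i = p
      · subst hi
        rw [Function.update_self, norm_smul, norm_inv, norm_norm,
          inv_mul_cancel₀ htpos.ne']
      · rw [Function.update_of_ne hi]; exact hKmem' _ hwK i
    have h2 : |A (Function.update w p (‖w p‖⁻¹ • w p))| ≤ N := hmax _ hK'
    rw [h1, hwA] at h2
    have h3 : ‖w p‖⁻¹ * N ≤ N := le_trans (le_abs_self _) h2
    have h4 : 1 < ‖w p‖⁻¹ := by
      rw [lt_inv_comm₀ one_pos htpos]
      simpa using hlt
    nlinarith
  -- all slots are equal up to sign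
  have hpm : ∀ p q : Fin r, w q = w p ∨ w q = -(w p) := by
    intro p q
    by_cases hqp : q = p
    · left; rw [hqp]
    by_contra hcon
    push_neg at hcon
    obtain ⟨hne1, hne2⟩ := hcon
    set x := w p with hxdef
    set y := w q with hydef
    set c : ℝ := ⟪x, y⟫ with hcdef
    have hx1 : ‖x‖ = 1 := by rw [hxdef]; exact hunit p
    have hy1 : ‖y‖ = 1 := by rw [hydef]; exact hunit q
    have hclt : c < 1 := by
      have hxy : x - y ≠ 0 := sub_ne_zero.2 (Ne.symm hne1)
      have h2 : 0 < ‖x - y‖ := norm_pos_iff.2 hxy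
      have h3 : 0 < ‖x - y‖^2 := by positivity
      rw [norm_sub_sq_real, hx1, hy1, ← hcdef] at h3
      nlinarith
    have hcgt : -1 < c := by
      have hxy : x + y ≠ 0 := by
        intro h
        apply hne2
        have hx' : x = -y := add_eq_zero_iff_eq_neg.1 h
        rw [hx', neg_neg]
      have h2 : 0 < ‖x + y‖ := norm_pos_iff.2 hxy
      have h3 : 0 < ‖x + y‖^2 := by positivity
      rw [norm_add_sq_real, hx1, hy1, ← hcdef] at h3
      nlinarith
    set B : EuclideanSpace ℝ (Fin d) → EuclideanSpace ℝ (Fin d) → ℝ :=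
      fun a b => A (Function.update (Function.update w q b) p a) with hBdef
    have hBupd : ∀ a b, Function.update (Function.update w q b) p a
        = Function.update (Function.update w p a) q b :=
      fun a b => Function.update_comm hqp b a w
    have hBaddL : ∀ a a' b, B (a + a') b = B a b + B a' b := by
      intro a a' b; simp only [hBdef]; exact A.map_update_add _ p a a'
    have hBsubL : ∀ a a' b, B (a - a') b = B a b - B a' b := by
      intro a a' b; simp only [hBdef]; exact A.map_update_sub _ p a a'
    have hBsmulL : ∀ (t : ℝ) a b, B (t • a) b = t * B a b := by
      intro t a b; simp only [hBdef]
      rw [A.map_update_smul _ p t a, smul_eq_mul]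
    have hBaddR : ∀ a b b', B a (b + b') = B a b + B a b' := by
      intro a b b'; simp only [hBdef]
      rw [hBupd a (b + b'), hBupd a b, hBupd a b']
      exact A.map_update_add _ q b b'
    have hBsubR : ∀ a b b', B a (b - b') = B a b - B a b' := by
      intro a b b'; simp only [hBdef]
      rw [hBupd a (b - b'), hBupd a b, hBupd a b']
      exact A.map_update_sub _ q b b'
    have hBsmulR : ∀ (t : ℝ) a b, B a (t • b) = t * B a b := by
      intro t a b; simp only [hBdef]
      rw [hBupd a (t • b), hBupd a b, A.map_update_smul _ q t b, smul_eq_mul]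
    have hBzeroR : ∀ a, B a 0 = 0 := by
      intro a; simp only [hBdef]
      exact A.map_coord_zero q
        (by rw [Function.update_of_ne hqp, Function.update_self])
    have hBxy : B x y = N := by
      simp only [hBdef]
      rw [hxdef, hydef, Function.update_eq_self, Function.update_eq_self]
      exact hwA
    have hByx : B y x = N := by
      have hswap : Function.update (Function.update w q x) p y
          = w ∘ (Equiv.swap p q) := by
        funext z
        by_cases hzp : z = p
        · subst hzp
          rw [Function.update_self, Function.comp_apply, Equiv.swap_apply_left, hydef]
        · by_cases hzq : z = q
          · subst hzq
            rw [Function.update_of_ne hqp, Function.update_self,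
              Function.comp_apply, Equiv.swap_apply_right, hxdef]
          · rw [Function.update_of_ne hzp, Function.update_of_ne hzq,
              Function.comp_apply, Equiv.swap_apply_of_ne_of_ne hzp hzq]
      simp only [hBdef]
      rw [hswap, hsymm w (Equiv.swap p q)]
      exact hwA
    have hBball : ∀ a b, ‖a‖ ≤ 1 → ‖b‖ ≤ 1 → |B a b| ≤ N := by
      intro a b ha hb
      simp only [hBdef]
      refine hmax _ (hKmem _ fun i => ?_)
      by_cases hip : i = p
      · subst hip; rw [Function.update_self]; exact ha
      · rw [Function.update_of_ne hip]
        by_cases hiq : i = q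
        · subst hiq; rw [Function.update_self]; exact hb
        · rw [Function.update_of_ne hiq]; exact hKmem' _ hwK i
    have hBdiagle : ∀ a : EuclideanSpace ℝ (Fin d), |B a a| ≤ N * ‖a‖^2 := by
      intro a
      by_cases ha : a = 0
      · subst ha
        have h0 : B 0 0 = 0 := by
          simp only [hBdef]
          exact A.map_coord_zero p (by simp)
        rw [h0]; simp
      · have hna : 0 < ‖a‖ := norm_pos_iff.2 ha
        have h1 : B a a = ‖a‖^2 * B (‖a‖⁻¹ • a) (‖a‖⁻¹ • a) := by
          conv_lhs => rw [show a = ‖a‖ • (‖a‖⁻¹ • a) by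
            rw [smul_smul, mul_inv_cancel₀ hna.ne', one_smul]]
          rw [hBsmulL, hBsmulR]; ring
        have hunitn : ‖(‖a‖⁻¹ • a)‖ ≤ 1 := by
          rw [norm_smul, norm_inv, norm_norm, inv_mul_cancel₀ hna.ne']
        have h3 : |B (‖a‖⁻¹ • a) (‖a‖⁻¹ • a)| ≤ N := hBball _ _ hunitn hunitn
        rw [h1, abs_mul, abs_of_nonneg (by positivity : (0:ℝ) ≤ ‖a‖^2)]
        calc ‖a‖^2 * |B (‖a‖⁻¹ • a) (‖a‖⁻¹ • a)| ≤ ‖a‖^2 * N :=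
              mul_le_mul_of_nonneg_left h3 (by positivity)
          _ = N * ‖a‖^2 := by ring
    set S := x + y with hSdef
    set Dv := x - y with hDdef
    have hS2 : ‖S‖^2 = 2 + 2*c := by
      rw [hSdef, norm_add_sq_real, hx1, hy1, ← hcdef]; ring
    have hD2 : ‖Dv‖^2 = 2 - 2*c := by
      rw [hDdef, norm_sub_sq_real, hx1, hy1, ← hcdef]; ring
    have hSn0 : ‖S‖ ≠ 0 := by
      intro h
      have h2 : ‖S‖^2 = 0 := by rw [h]; ring
      rw [hS2] at h2; linarith
    have hDn0 : ‖Dv‖ ≠ 0 := by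
      intro h
      have h2 : ‖Dv‖^2 = 0 := by rw [h]; ring
      rw [hD2] at h2; linarith
    have hE1 : B S S - B Dv Dv = 4 * N := by
      rw [hSdef, hDdef]
      simp only [hBaddL, hBaddR, hBsubL, hBsubR, hBxy, hByx]
      ring
    have hBSSle : B S S ≤ N * (2 + 2*c) := by
      have h := hBdiagle S; rw [hS2] at h
      exact le_trans (le_abs_self _) h
    have hBDDge : -(N * (2 - 2*c)) ≤ B Dv Dv := by
      have h := hBdiagle Dv; rw [hD2] at h
      linarith [neg_abs_le (B Dv Dv)]
    have hBSS : B S S = N * (2 + 2*c) := by linarith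
    have hBDD : B Dv Dv = -(N * (2 - 2*c)) := by linarith
    set sh := ‖S‖⁻¹ • S with hshdef
    set dh := ‖Dv‖⁻¹ • Dv with hdhdef
    have hsh1 : ‖sh‖ = 1 := by
      rw [hshdef, norm_smul, norm_inv, norm_norm, inv_mul_cancel₀ hSn0]
    have hdh1 : ‖dh‖ = 1 := by
      rw [hdhdef, norm_smul, norm_inv, norm_norm, inv_mul_cancel₀ hDn0]
    have hkeyS : ‖S‖⁻¹ * ‖S‖⁻¹ * (2 + 2*c) = 1 := by
      rw [← hS2, pow_two]
      field_simp
    have hkeyD : ‖Dv‖⁻¹ * ‖Dv‖⁻¹ * (2 - 2*c) = 1 := by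
      rw [← hD2, pow_two]
      field_simp
    have hAw1 : B sh sh = N := by
      rw [hshdef, hBsmulL, hBsmulR, hBSS]
      linear_combination N * hkeyS
    have hAw2 : B dh (-dh) = N := by
      have hneg : B dh (-dh) = -(B dh dh) := by
        have h0 : (-dh) = (0 : EuclideanSpace ℝ (Fin d)) - dh := (zero_sub dh).symm
        rw [h0, hBsubR, hBzeroR, zero_sub]
      rw [hneg, hdhdef, hBsmulL, hBsmulR, hBDD]
      linear_combination N * hkeyD
    -- the two modified tuples are also maximizers
    have hw1P : Function.update (Function.update w q sh) p sh ∈ P := by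
      rw [hPdef]
      refine ⟨hKmem _ fun i => ?_, ?_⟩
      · by_cases hip : i = p
        · subst hip; rw [Function.update_self]; exact le_of_eq hsh1
        · rw [Function.update_of_ne hip]
          by_cases hiq : i = q
          · subst hiq; rw [Function.update_self]; exact le_of_eq hsh1
          · rw [Function.update_of_ne hiq]; exact hKmem' _ hwK i
      · have h := hAw1; simp only [hBdef] at h; exact h
    have hw2P : Function.update (Function.update w q (-dh)) p dh ∈ P := by
      rw [hPdef]
      refine ⟨hKmem _ fun i => ?_, ?_⟩
      · by_cases hip : i = p
        · subst hip; rw [Function.update_self]; exact le_of_eq hdh1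
        · rw [Function.update_of_ne hip]
          by_cases hiq : i = q
          · subst hiq; rw [Function.update_self, norm_neg]; exact le_of_eq hdh1
          · rw [Function.update_of_ne hiq]; exact hKmem' _ hwK i
      · have h := hAw2; simp only [hBdef] at h; exact h
    have hg1 := hwg _ hw1P
    have hg2 := hwg _ hw2P
    simp only [hgdef] at hg1 hg2
    have hs1 := g_split18 w p q hqp sh sh
    have hs2 := g_split18 w p q hqp dh (-dh)
    have hsw := g_split18 w p q hqp x y
    have hwupd : Function.update (Function.update w q y) p x = w := by
      rw [hxdef, hydef, Function.update_eq_self, Function.update_eq_self]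
    rw [hwupd] at hsw
    rw [hs1, hsw] at hg1
    rw [hs2, hsw] at hg2
    -- scalar simplifications
    have hxx : ⟪x, x⟫ = 1 := by
      rw [real_inner_self_eq_norm_sq, hx1]; norm_num
    have hyy : ⟪y, y⟫ = 1 := by
      rw [real_inner_self_eq_norm_sq, hy1]; norm_num
    have hyxc : ⟪y, x⟫ = c := by rw [real_inner_comm]
    have hxyc : ⟪x, y⟫ = c := hcdef.symm
    have hss1 : ⟪sh, sh⟫ = 1 := by
      rw [real_inner_self_eq_norm_sq, hsh1]; norm_num
    have hdd1 : ⟪dh, dh⟫ = 1 := by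
      rw [real_inner_self_eq_norm_sq, hdh1]; norm_num
    have hdnd : ⟪dh, -dh⟫ = -1 := by rw [inner_neg_right, hdd1]
    have hndd : ⟪-dh, dh⟫ = -1 := by rw [inner_neg_left, hdd1]
    have hnn : ⟪-dh, -dh⟫ = 1 := by
      rw [inner_neg_left, inner_neg_right, hdd1]; norm_num
    have hcommS : ∀ aa : EuclideanSpace ℝ (Fin d),
        (∑ z ∈ (Finset.univ.erase p).erase q, (⟪w z, aa⟫)^2)
          = ∑ z ∈ (Finset.univ.erase p).erase q, (⟪aa, w z⟫)^2 :=
      fun aa => Finset.sum_congr rfl fun z _ => by rw [real_inner_comm]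
    have hnegS : (∑ z ∈ (Finset.univ.erase p).erase q, (⟪-dh, w z⟫)^2)
        = ∑ z ∈ (Finset.univ.erase p).erase q, (⟪dh, w z⟫)^2 :=
      Finset.sum_congr rfl fun z _ => by rw [inner_neg_left]; exact neg_sq _
    rw [hcommS sh, hcommS x, hcommS y, hxx, hyy, hxyc, hyxc, hss1] at hg1
    rw [hcommS dh, hcommS (-dh), hnegS, hcommS x, hcommS y,
      hxx, hyy, hxyc, hyxc, hdd1, hdnd, hndd, hnn] at hg2
    -- key algebraic relations
    have hT1eq : (2 + 2*c) * (∑ z ∈ (Finset.univ.erase p).erase q, (⟪sh, w z⟫)^2)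
        = ∑ z ∈ (Finset.univ.erase p).erase q, (⟪S, w z⟫)^2 := by
      rw [Finset.mul_sum]
      refine Finset.sum_congr rfl fun z _ => ?_
      rw [hshdef, real_inner_smul_left]
      linear_combination (⟪S, w z⟫)^2 * hkeyS
    have hT2eq : (2 - 2*c) * (∑ z ∈ (Finset.univ.erase p).erase q, (⟪dh, w z⟫)^2)
        = ∑ z ∈ (Finset.univ.erase p).erase q, (⟪Dv, w z⟫)^2 := by
      rw [Finset.mul_sum]
      refine Finset.sum_congr rfl fun z _ => ?_
      rw [hdhdef, real_inner_smul_left]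
      linear_combination (⟪Dv, w z⟫)^2 * hkeyD
    have hab : (∑ z ∈ (Finset.univ.erase p).erase q, (⟪S, w z⟫)^2)
        + (∑ z ∈ (Finset.univ.erase p).erase q, (⟪Dv, w z⟫)^2)
        = 2*(∑ z ∈ (Finset.univ.erase p).erase q, (⟪x, w z⟫)^2)
          + 2*(∑ z ∈ (Finset.univ.erase p).erase q, (⟪y, w z⟫)^2) := by
      rw [← Finset.sum_add_distrib, Finset.mul_sum, Finset.mul_sum,
        ← Finset.sum_add_distrib]
      refine Finset.sum_congr rfl fun z _ => ?_
      rw [hSdef, hDdef, inner_add_left, inner_sub_left]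
      ring
    set T1 := ∑ z ∈ (Finset.univ.erase p).erase q, (⟪sh, w z⟫)^2 with hT1d
    set T2 := ∑ z ∈ (Finset.univ.erase p).erase q, (⟪dh, w z⟫)^2 with hT2d
    set Ux := ∑ z ∈ (Finset.univ.erase p).erase q, (⟪x, w z⟫)^2 with hUxd
    set Uy := ∑ z ∈ (Finset.univ.erase p).erase q, (⟪y, w z⟫)^2 with hUyd
    set al := ∑ z ∈ (Finset.univ.erase p).erase q, (⟪S, w z⟫)^2 with hald
    set be := ∑ z ∈ (Finset.univ.erase p).erase q, (⟪Dv, w z⟫)^2 with hbed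
    set CC := ∑ z ∈ (Finset.univ.erase p).erase q,
      ∑ z' ∈ (Finset.univ.erase p).erase q, (⟪w z, w z'⟫)^2 with hCCd
    clear_value T1 T2 Ux Uy al be CC
    have hineq1 : 4*T1 ≤ 2*Ux + 2*Uy - 2 + 2*c^2 := by linarith only [hg1]
    have hineq2 : 4*T2 ≤ 2*Ux + 2*Uy - 2 + 2*c^2 := by linarith only [hg2]
    have hk1 : (0:ℝ) ≤ (2 + 2*c) * ((2*Ux + 2*Uy - 2 + 2*c^2) - 4*T1) :=
      mul_nonneg (by linarith only [hcgt]) (by linarith only [hineq1])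
    have hk2 : (0:ℝ) ≤ (2 - 2*c) * ((2*Ux + 2*Uy - 2 + 2*c^2) - 4*T2) :=
      mul_nonneg (by linarith only [hclt]) (by linarith only [hineq2])
    have hk1' : (0:ℝ) ≤ (2 + 2*c) * (2*Ux + 2*Uy - 2 + 2*c^2) - 4*al := by
      nlinarith only [hk1, hT1eq]
    have hk2' : (0:ℝ) ≤ (2 - 2*c) * (2*Ux + 2*Uy - 2 + 2*c^2) - 4*be := by
      nlinarith only [hk2, hT2eq]
    have hsum : (0:ℝ) ≤ 4*(2*Ux + 2*Uy - 2 + 2*c^2) - 4*(al + be) := by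
      nlinarith only [hk1', hk2']
    have hc2 : 1 ≤ c^2 := by nlinarith only [hsum, hab]
    have hle1 : (0:ℝ) < (1 - c) * (1 + c) :=
      mul_pos (by linarith only [hclt]) (by linarith only [hcgt])
    nlinarith only [hc2, hle1]
  -- conclude: all slots are ± a fixed unit vector
  have hu1 : ‖w ⟨0, hrpos⟩‖ = 1 := hunit _
  have hweq : ∀ z, w z = (if w z = w ⟨0, hrpos⟩ then (1:ℝ) else (-1:ℝ)) • w ⟨0, hrpos⟩ := by
    intro z
    by_cases h : w z = w ⟨0, hrpos⟩
    · rw [if_pos h, one_smul, h]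
    · rw [if_neg h]
      rcases hpm ⟨0, hrpos⟩ z with h1 | h1
      · exact absurd h1 h
      · rw [h1, neg_one_smul]
  have hAw' : A w = (∏ z : Fin r, (if w z = w ⟨0, hrpos⟩ then (1:ℝ) else (-1:ℝ)))
      * A (fun _ => w ⟨0, hrpos⟩) := by
    calc A w = A (fun z => (if w z = w ⟨0, hrpos⟩ then (1:ℝ) else (-1:ℝ)) • w ⟨0, hrpos⟩) := by
          congr 1; funext z; exact hweq z
      _ = _ := by rw [A.map_smul_univ, smul_eq_mul]
  have habs : |∏ z : Fin r, (if w z = w ⟨0, hrpos⟩ then (1:ℝ) else (-1:ℝ))| = 1 := by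
    rw [Finset.abs_prod]
    have h : ∀ z ∈ Finset.univ,
        |if w z = w ⟨0, hrpos⟩ then (1:ℝ) else (-1:ℝ)| = 1 := by
      intro z _; split <;> simp
    rw [Finset.prod_congr rfl h, Finset.prod_const_one]
  have h5 : |A w| = N := by rw [hwA]; exact abs_of_pos hNpos
  have hfin : N = |A (fun _ => w ⟨0, hrpos⟩)| := by
    rw [← h5, hAw', abs_mul, habs, one_mul]
  rw [hfin]
  exact hdiag _ (le_of_eq hu1)

/-- Banach's theorem on symmetric tensors: the norm of a symmetric continuous
`r`-multilinear form on `ℝ^d` (its injective tensor norm) is attained on the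
diagonal: `‖A‖ = sup_{‖u‖ ≤ 1} |A(u, …, u)|`. -/
theorem stmt18 {d r : ℕ}
    (A : ContinuousMultilinearMap ℝ (fun _ : Fin r => EuclideanSpace ℝ (Fin d)) ℝ)
    (hsymm : ∀ (v : Fin r → EuclideanSpace ℝ (Fin d)) (σ : Equiv.Perm (Fin r)),
      A (v ∘ σ) = A v) :
    ‖A‖ = ⨆ u : Metric.closedBall (0 : EuclideanSpace ℝ (Fin d)) 1,
      |A fun _ => (u : EuclideanSpace ℝ (Fin d))| := by
  classical
  have hball : (0 : EuclideanSpace ℝ (Fin d)) ∈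
      Metric.closedBall (0 : EuclideanSpace ℝ (Fin d)) 1 :=
    Metric.mem_closedBall_self zero_le_one
  haveI : Nonempty (Metric.closedBall (0 : EuclideanSpace ℝ (Fin d)) 1) := ⟨⟨0, hball⟩⟩
  have hbdd : BddAbove (Set.range fun u : Metric.closedBall (0 : EuclideanSpace ℝ (Fin d)) 1
      => |A fun _ => (u : EuclideanSpace ℝ (Fin d))|) := by
    refine ⟨‖A‖, ?_⟩
    rintro _ ⟨u, rfl⟩
    have h1 := A.le_opNorm (fun _ => (u : EuclideanSpace ℝ (Fin d)))
    rw [Real.norm_eq_abs] at h1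
    refine le_trans h1 ?_
    have h2 : (∏ _i : Fin r, ‖(u : EuclideanSpace ℝ (Fin d))‖) ≤ 1 :=
      Finset.prod_le_one (fun i _ => norm_nonneg _)
        (fun i _ => mem_closedBall_zero_iff.1 u.2)
    exact mul_le_of_le_one_right (norm_nonneg A) h2
  set M := ⨆ u : Metric.closedBall (0 : EuclideanSpace ℝ (Fin d)) 1,
      |A fun _ => (u : EuclideanSpace ℝ (Fin d))| with hM
  have hdiag : ∀ u : EuclideanSpace ℝ (Fin d), ‖u‖ ≤ 1 → |A fun _ => u| ≤ M :=
    fun u hu => le_ciSup hbdd (⟨u, mem_closedBall_zero_iff.2 hu⟩ :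
      Metric.closedBall (0 : EuclideanSpace ℝ (Fin d)) 1)
  have hcore := core18 A hsymm hdiag
  apply le_antisymm
  · have hM0 : 0 ≤ M := le_trans (abs_nonneg _) (hdiag 0 (by simp))
    refine A.opNorm_le_bound hM0 ?_
    intro m
    rw [Real.norm_eq_abs]
    by_cases hz : ∃ i, m i = 0
    · obtain ⟨i, hi⟩ := hz
      rw [A.map_coord_zero i hi, abs_zero]
      positivity
    · push_neg at hz
      have h1 : A m = (∏ i : Fin r, ‖m i‖) * A (fun i => ‖m i‖⁻¹ • m i) := by
        calc A m = A (fun i => ‖m i‖ • (‖m i‖⁻¹ • m i)) := by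
              congr 1; funext i
              rw [smul_smul, mul_inv_cancel₀ (norm_ne_zero_iff.2 (hz i)), one_smul]
          _ = _ := by rw [A.map_smul_univ, smul_eq_mul]
      have hprodnn : (0:ℝ) ≤ ∏ i : Fin r, ‖m i‖ :=
        Finset.prod_nonneg fun i _ => norm_nonneg _
      rw [h1, abs_mul, abs_of_nonneg hprodnn, mul_comm]
      refine mul_le_mul_of_nonneg_right ?_ hprodnn
      refine hcore _ fun i => ?_
      rw [norm_smul, norm_inv, norm_norm,
        inv_mul_cancel₀ (norm_ne_zero_iff.2 (hz i))]
  · refine ciSup_le fun u => ?_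
    have h1 := A.le_opNorm (fun _ => (u : EuclideanSpace ℝ (Fin d)))
    rw [Real.norm_eq_abs] at h1
    refine le_trans h1 ?_
    have h2 : (∏ _i : Fin r, ‖(u : EuclideanSpace ℝ (Fin d))‖) ≤ 1 :=
      Finset.prod_le_one (fun i _ => norm_nonneg _)
        (fun i _ => mem_closedBall_zero_iff.1 u.2)
    exact mul_le_of_le_one_right (norm_nonneg A) h2
end
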